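/- arXiv:2605.07333 — 4 statements merged into one kernel-verified Lean document; each statement's English description precedes it below -/
import Mathlib

section
/- Let σ : ℝⁿ → ℝⁿ be the softmax map, σ_i(w) = exp(w_i)/∑_{k=1}^n exp(w_k). Then for every w ∈ ℝⁿ and every direction h ∈ ℝⁿ, the directional derivative satisfies ‖Dσ(w) h‖₁ ≤ 2 ‖h‖_∞. -/
/-- The softmax map on `ℝⁿ`. -/
noncomputable def softmax {n : ℕ} (w : Fin n → ℝ) : Fin n → ℝ :=
  fun i => Real.exp (w i) / ∑ k, Real.exp (w k)

/-- The Jacobian of softmax at `w` applied to a direction `h`: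
`(J(w)h)_i = ∑_k σ_i(w)(1{i=k} − σ_k(w)) h_k = σ_i(w)(h_i − ∑_k σ_k(w) h_k)`. -/
noncomputable def softmaxJacApply {n : ℕ} (w h : Fin n → ℝ) : Fin n → ℝ :=
  fun i => ∑ k, softmax w i * ((if i = k then 1 else 0) - softmax w k) * h k

lemma softmax_nonneg {n : ℕ} (w : Fin n → ℝ) (i : Fin n) : 0 ≤ softmax w i := by
  unfold softmax
  positivity

lemma softmax_sum {n : ℕ} (hn : 0 < n) (w : Fin n → ℝ) : ∑ i, softmax w i = 1 := by
  unfold softmax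
  rw [← Finset.sum_div]
  have hpos : 0 < ∑ k, Real.exp (w k) :=
    Finset.sum_pos (fun k _ => Real.exp_pos _) ⟨⟨0, hn⟩, Finset.mem_univ _⟩
  field_simp

lemma softmaxJacApply_eq {n : ℕ} (w h : Fin n → ℝ) (i : Fin n) :
    softmaxJacApply w h i
      = softmax w i * (h i - ∑ k, softmax w k * h k) := by
  unfold softmaxJacApply
  rw [mul_sub, Finset.mul_sum]
  rw [show ∀ S : ℝ, softmax w i * h i - S
      = (∑ k, if i = k then softmax w i * h k else 0) - S from ?_]
  · rw [← Finset.sum_sub_distrib]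
    apply Finset.sum_congr rfl
    intro k _
    by_cases hik : i = k <;> simp [hik] <;> ring
  · intro S
    simp
  
/-- for every `w` and direction `h`,
`‖Dσ(w) h‖₁ ≤ 2 ‖h‖_∞`. -/
theorem softmax_jacobian_l1_bound {n : ℕ} (w h : Fin n → ℝ) :
    ∑ i, |softmaxJacApply w h i| ≤ 2 * ⨆ i, |h i| := by
  rcases Nat.eq_zero_or_pos n with h0 | hn
  · subst h0
    simp [Real.iSup_of_isEmpty]
  · set M := ⨆ i, |h i| with hMdef
    have hM : ∀ i, |h i| ≤ M := fun i =>
      le_ciSup (f := fun i => |h i|) (Set.Finite.bddAbove (Set.finite_range _)) i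
    have hM0 : 0 ≤ M := le_trans (abs_nonneg _) (hM ⟨0, hn⟩)
    set S := ∑ k, softmax w k * h k with hSdef
    have hS : |S| ≤ M := by
      calc |S| ≤ ∑ k, |softmax w k * h k| := Finset.abs_sum_le_sum_abs _ _
        _ ≤ ∑ k, softmax w k * M := by
            apply Finset.sum_le_sum
            intro k _
            rw [abs_mul, abs_of_nonneg (softmax_nonneg w k)]
            exact mul_le_mul_of_nonneg_left (hM k) (softmax_nonneg w k)
        _ = M := by rw [← Finset.sum_mul, softmax_sum hn, one_mul]
    calc ∑ i, |softmaxJacApply w h i|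
        ≤ ∑ i, softmax w i * (2 * M) := by
          apply Finset.sum_le_sum
          intro i _
          rw [softmaxJacApply_eq, abs_mul, abs_of_nonneg (softmax_nonneg w i)]
          apply mul_le_mul_of_nonneg_left _ (softmax_nonneg w i)
          calc |h i - S| ≤ |h i| + |S| := abs_sub _ _
            _ ≤ M + M := add_le_add (hM i) hS
            _ = 2 * M := by ring
      _ = 2 * M := by rw [← Finset.sum_mul, softmax_sum hn, one_mul]
end

section
/- The softmax map σ : ℝⁿ → ℝⁿ is Lipschitz from the sup-norm to the ℓ₁-norm with constant 2: for all w, w' ∈ ℝⁿ, ‖σ(w) − σ(w')‖₁ ≤ 2 ‖w − w'‖_∞. -/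
/-- softmax is 2-Lipschitz from the sup-norm to the ℓ₁-norm. -/
theorem softmax_lipschitz_sup_to_l1 {n : ℕ} (w w' : Fin n → ℝ) :
    ∑ i, |softmax w i - softmax w' i| ≤ 2 * ⨆ i, |w i - w' i| := by
  rcases Nat.eq_zero_or_pos n with hn | hn
  · subst hn
    simp [Real.iSup_of_isEmpty]
  · have hne : Nonempty (Fin n) := ⟨⟨0, hn⟩⟩
    set t := ⨆ i, |w i - w' i| with htdef
    have ht : ∀ i, |w i - w' i| ≤ t := fun i =>
      le_ciSup (Set.Finite.bddAbove (Set.finite_range fun i => |w i - w' i|)) i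
    have ht0 : 0 ≤ t := le_trans (abs_nonneg _) (ht (Classical.arbitrary _))
    set A := ∑ k, Real.exp (w k) with hA
    set B := ∑ k, Real.exp (w' k) with hB
    have hApos : 0 < A :=
      Finset.sum_pos (fun i _ => Real.exp_pos _) ⟨Classical.arbitrary _, Finset.mem_univ _⟩
    have hBpos : 0 < B :=
      Finset.sum_pos (fun i _ => Real.exp_pos _) ⟨Classical.arbitrary _, Finset.mem_univ _⟩
    have hMpos : 0 < max A B := lt_max_of_lt_left hApos
    -- pointwise: exp(-t) * max eᵢ e'ᵢ ≤ min eᵢ e'ᵢ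
    have key : ∀ i, Real.exp (-t) * max (Real.exp (w i)) (Real.exp (w' i))
        ≤ min (Real.exp (w i)) (Real.exp (w' i)) := by
      intro i
      have h := abs_le.mp (ht i)
      have h1 : Real.exp (-t) * Real.exp (w' i) ≤ Real.exp (w i) := by
        rw [← Real.exp_add]; exact Real.exp_le_exp.mpr (by linarith [h.1])
      have h2 : Real.exp (-t) * Real.exp (w i) ≤ Real.exp (w' i) := by
        rw [← Real.exp_add]; exact Real.exp_le_exp.mpr (by linarith [h.2])
      rcases le_total (w i) (w' i) with hle | hle
      · rw [max_eq_right (Real.exp_le_exp.mpr hle), min_eq_left (Real.exp_le_exp.mpr hle)]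
        exact h1
      · rw [max_eq_left (Real.exp_le_exp.mpr hle), min_eq_right (Real.exp_le_exp.mpr hle)]
        exact h2
    have hmin : ∀ i, Real.exp (-t) * max (Real.exp (w i)) (Real.exp (w' i)) / max A B
        ≤ min (softmax w i) (softmax w' i) := by
      intro i
      refine le_min ?_ ?_
      · calc Real.exp (-t) * max (Real.exp (w i)) (Real.exp (w' i)) / max A B
            ≤ min (Real.exp (w i)) (Real.exp (w' i)) / max A B := by
              gcongr
              exact key i
          _ ≤ Real.exp (w i) / A := by
              apply div_le_div₀ (Real.exp_pos _).le (min_le_left _ _) hApos (le_max_left _ _)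
          _ = softmax w i := rfl
      · calc Real.exp (-t) * max (Real.exp (w i)) (Real.exp (w' i)) / max A B
            ≤ min (Real.exp (w i)) (Real.exp (w' i)) / max A B := by
              gcongr
              exact key i
          _ ≤ Real.exp (w' i) / B := by
              apply div_le_div₀ (Real.exp_pos _).le (min_le_right _ _) hBpos (le_max_right _ _)
          _ = softmax w' i := rfl
    have hsumM : max A B ≤ ∑ i, max (Real.exp (w i)) (Real.exp (w' i)) := by
      refine max_le ?_ ?_
      · exact Finset.sum_le_sum fun i _ => le_max_left _ _
      · exact Finset.sum_le_sum fun i _ => le_max_right _ _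
    have hS : Real.exp (-t) ≤ ∑ i, min (softmax w i) (softmax w' i) := by
      calc Real.exp (-t) = Real.exp (-t) * max A B / max A B := by
            field_simp
        _ ≤ Real.exp (-t) * (∑ i, max (Real.exp (w i)) (Real.exp (w' i))) / max A B := by
            gcongr
        _ = ∑ i, Real.exp (-t) * max (Real.exp (w i)) (Real.exp (w' i)) / max A B := by
            rw [Finset.mul_sum, Finset.sum_div]
        _ ≤ ∑ i, min (softmax w i) (softmax w' i) :=
            Finset.sum_le_sum fun i _ => hmin i
    have hsum1 : ∑ i, softmax w i = 1 := by
      simp only [softmax, ← Finset.sum_div, ← hA]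
      exact div_self hApos.ne'
    have hsum1' : ∑ i, softmax w' i = 1 := by
      simp only [softmax, ← Finset.sum_div, ← hB]
      exact div_self hBpos.ne'
    have habs : ∀ i, |softmax w i - softmax w' i|
        = softmax w i + softmax w' i - 2 * min (softmax w i) (softmax w' i) := by
      intro i
      rcases le_total (softmax w i) (softmax w' i) with h | h
      · rw [abs_of_nonpos (by linarith), min_eq_left h]; ring
      · rw [abs_of_nonneg (by linarith), min_eq_right h]; ring
    calc ∑ i, |softmax w i - softmax w' i|
        = ∑ i, (softmax w i + softmax w' i - 2 * min (softmax w i) (softmax w' i)) :=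
          Finset.sum_congr rfl fun i _ => habs i
      _ = (∑ i, softmax w i) + (∑ i, softmax w' i)
            - 2 * ∑ i, min (softmax w i) (softmax w' i) := by
          rw [Finset.sum_sub_distrib, Finset.sum_add_distrib, Finset.mul_sum]
      _ = 2 - 2 * ∑ i, min (softmax w i) (softmax w' i) := by
          rw [hsum1, hsum1']; ring
      _ ≤ 2 - 2 * Real.exp (-t) := by linarith
      _ ≤ 2 * t := by
          have := Real.add_one_le_exp (-t)
          linarith
end

section
/- Let M, P ∈ ℝ^{S×S} be row-stochastic matrices, γ ∈ [0,1), and suppose there exists C ∈ (0, (1−γ)/2) such that M(s,s) ≥ (1+γ)/2 + C for every s ∈ S. Then the affine operator T(v) = (I − M + γP)v + M r is a contraction in the sup-norm with modulus 1 − C: for all u, v ∈ ℝ^S, ‖T(v) − T(u)‖_∞ ≤ (1 − C)‖v − u‖_∞. -/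
/-- under the diagonal-margin condition, the weighted softmax TD
operator `T(v) = (I − M + γP)v + Mr` is a sup-norm contraction with modulus `1 − C`. -/
theorem td_operator_contraction {S : Type*} [Fintype S] [DecidableEq S]
    (M P : Matrix S S ℝ) (γ C : ℝ) (r : S → ℝ)
    (hM0 : ∀ s s', 0 ≤ M s s') (hM1 : ∀ s, ∑ s', M s s' = 1)
    (hP0 : ∀ s s', 0 ≤ P s s') (hP1 : ∀ s, ∑ s', P s s' = 1)
    (hγ0 : 0 ≤ γ) (hγ1 : γ < 1)
    (hC0 : 0 < C) (hC1 : C < (1 - γ) / 2)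
    (hdiag : ∀ s, (1 + γ) / 2 + C ≤ M s s)
    (T : (S → ℝ) → (S → ℝ))
    (hT : ∀ v, T v = ((1 : Matrix S S ℝ) - M + γ • P).mulVec v + M.mulVec r)
    (u v : S → ℝ) :
    (⨆ s, |T v s - T u s|) ≤ (1 - C) * ⨆ s, |v s - u s| := by
  set A : Matrix S S ℝ := (1 : Matrix S S ℝ) - M + γ • P with hA
  have hMle1 : ∀ s, M s s ≤ 1 := by
    intro s
    calc M s s ≤ ∑ s', M s s' :=
          Finset.single_le_sum (fun i _ => hM0 s i) (Finset.mem_univ s)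
      _ = 1 := hM1 s
  have hrow : ∀ s, ∑ s', |A s s'| ≤ 1 - C := by
    intro s
    have hle : ∀ s', |A s s'| ≤ (if s = s' then 1 - M s s' else M s s') + γ * P s s' := by
      intro s'
      by_cases h : s = s'
      · subst h
        have hAval : A s s = (1 - M s s) + γ * P s s := by
          simp [hA, Matrix.add_apply, Matrix.sub_apply, Matrix.one_apply_eq,
            Matrix.smul_apply, smul_eq_mul]
        have hnn : (0:ℝ) ≤ (1 - M s s) + γ * P s s := by
          have h1 := hMle1 s
          have h2 := hP0 s s
          nlinarith
        rw [hAval, if_pos rfl, abs_of_nonneg hnn]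
      · have hAval : A s s' = -(M s s') + γ * P s s' := by
          simp [hA, Matrix.add_apply, Matrix.sub_apply, Matrix.one_apply_ne h,
            Matrix.smul_apply, smul_eq_mul]
        rw [hAval, if_neg h]
        calc |-(M s s') + γ * P s s'| ≤ |-(M s s')| + |γ * P s s'| := abs_add_le _ _
          _ = M s s' + γ * P s s' := by
              rw [abs_neg, abs_of_nonneg (hM0 s s'),
                abs_of_nonneg (mul_nonneg hγ0 (hP0 s s'))]
    calc ∑ s', |A s s'|
        ≤ ∑ s', ((if s = s' then 1 - M s s' else M s s') + γ * P s s') :=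
          Finset.sum_le_sum fun i _ => hle i
      _ = (∑ s', (M s s' + if s = s' then 1 - 2 * M s s' else 0)) + γ * ∑ s', P s s' := by
          rw [Finset.sum_add_distrib, ← Finset.mul_sum]
          congr 1
          apply Finset.sum_congr rfl
          intro i _
          by_cases h : s = i <;> simp [h] <;> ring
      _ = (1 + (1 - 2 * M s s)) + γ := by
          rw [Finset.sum_add_distrib, hM1 s, hP1 s, Finset.sum_ite_eq Finset.univ s
            (fun s' => 1 - 2 * M s s'), if_pos (Finset.mem_univ s), mul_one]
      _ ≤ 1 - C := by
          have := hdiag s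
          nlinarith
  rcases isEmpty_or_nonempty S with hS | hS
  · simp [Real.iSup_of_isEmpty]
  · set N : ℝ := ⨆ s, |v s - u s| with hN
    have hbd : BddAbove (Set.range fun s => |v s - u s|) :=
      (Set.finite_range _).bddAbove
    have hN0 : 0 ≤ N := le_trans (abs_nonneg _) (le_ciSup hbd (Classical.arbitrary S))
    have hNle : ∀ j, |v j - u j| ≤ N := fun j => le_ciSup hbd j
    apply ciSup_le
    intro s
    have hdiff : T v s - T u s = ∑ j, A s j * (v j - u j) := by
      rw [hT v, hT u]
      simp only [Pi.add_apply, Matrix.mulVec, dotProduct]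
      have h : (∑ x, A s x * v x) - ∑ x, A s x * u x = ∑ j, A s j * (v j - u j) := by
        rw [← Finset.sum_sub_distrib]
        exact Finset.sum_congr rfl fun j _ => by ring
      linarith [h]
    rw [hdiff]
    calc |∑ j, A s j * (v j - u j)| ≤ ∑ j, |A s j * (v j - u j)| :=
          Finset.abs_sum_le_sum_abs _ _
      _ = ∑ j, |A s j| * |v j - u j| := by simp [abs_mul]
      _ ≤ ∑ j, |A s j| * N :=
          Finset.sum_le_sum fun j _ => mul_le_mul_of_nonneg_left (hNle j) (abs_nonneg _)
      _ = (∑ j, |A s j|) * N := by rw [Finset.sum_mul]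
      _ ≤ (1 - C) * N := mul_le_mul_of_nonneg_right (hrow s) hN0
end

section
/- Suppose M_π is a row-stochastic matrix on finite S with min_s M_π(s,s) ≥ (1+γ)/2 + C for constants γ ∈ [0,1) and C ∈ (0, (1−γ)/2), and suppose M̂ is another row-stochastic matrix with max_s |M̂(s,s) − M_π(s,s)| ≤ C/2. Then for any row-stochastic P̂, the operator-∞-norm of I − M̂ + γP̂ is at most 1 − C. -/
/-- if `M_π` has diagonal margin `(1+γ)/2 + C` and `M̂` is a
row-stochastic matrix with diagonal entries within `C/2` of those of `M_π`,
then for any row-stochastic `P̂` the operator-∞-norm of `I − M̂ + γP̂` is at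
most `1 − C`. -/
theorem perturbed_contraction_norm {S : Type*} [Fintype S] [DecidableEq S]
    (Mπ Mh Ph : Matrix S S ℝ) (γ C : ℝ)
    (hγ0 : 0 ≤ γ) (hγ1 : γ < 1) (hC0 : 0 < C) (hC1 : C < (1 - γ) / 2)
    (hMπ0 : ∀ s s', 0 ≤ Mπ s s') (hMπ1 : ∀ s, ∑ s', Mπ s s' = 1)
    (hdiag : ∀ s, (1 + γ) / 2 + C ≤ Mπ s s)
    (hMh0 : ∀ s s', 0 ≤ Mh s s') (hMh1 : ∀ s, ∑ s', Mh s s' = 1)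
    (hpert : ∀ s, |Mh s s - Mπ s s| ≤ C / 2)
    (hPh0 : ∀ s s', 0 ≤ Ph s s') (hPh1 : ∀ s, ∑ s', Ph s s' = 1) :
    (⨆ s, ∑ s', |((1 : Matrix S S ℝ) - Mh + γ • Ph) s s'|) ≤ 1 - C := by
  have h1C : (0:ℝ) ≤ 1 - C := by linarith
  apply Real.iSup_le _ h1C
  intro s
  have hMhle : Mh s s ≤ 1 := by
    rw [← hMh1 s]
    exact Finset.single_le_sum (fun i _ => hMh0 s i) (Finset.mem_univ s)
  calc ∑ s', |((1 : Matrix S S ℝ) - Mh + γ • Ph) s s'|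
      ≤ ∑ s', ((if s = s' then 1 - 2 * Mh s s' else 0) + Mh s s' + γ * Ph s s') := by
        apply Finset.sum_le_sum
        intro s' _
        have h1 : (0:ℝ) ≤ Mh s s' := hMh0 s s'
        have h2 : (0:ℝ) ≤ γ * Ph s s' := mul_nonneg hγ0 (hPh0 s s')
        simp only [Matrix.add_apply, Matrix.sub_apply, Matrix.one_apply, Matrix.smul_apply,
          smul_eq_mul]
        split_ifs with h
        · subst h
          rw [abs_of_nonneg (by linarith)]
          linarith
        · rw [abs_le]
          constructor <;> linarith
    _ = (1 - 2 * Mh s s) + 1 + γ := by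
        rw [Finset.sum_add_distrib, Finset.sum_add_distrib, Finset.sum_ite_eq, ← Finset.mul_sum,
          hMh1, hPh1]
        simp
    _ ≤ 1 - C := by
        have := abs_le.mp (hpert s)
        have := hdiag s
        linarith
end
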